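/- arXiv:1106.3754 — 5 statements merged into one kernel-verified Lean document; each statement's English description precedes it below -/
import Mathlib

section
/- For n odd, the maximum cardinality of a family of Hamiltonian paths in K_n such that the union of any two distinct members contains an odd cycle equals binomial(n, floor(n/2)). -/
/-
A Hamiltonian path on `2k + 1` vertices is bipartite with parts of sizes `k + 1` and `k`. Two
paths with the same `(k + 1)`-part have a bipartite union, hence no odd cycle, so such a family
injects into the `(k + 1)`-subsets. Conversely, for every `(k + 1)`-set `A` take a Hamiltonian
path `P A` alternating between `A` and its complement. For `A ≠ B` pick `x ∈ A \ B` and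
`y ∈ A ∩ B`: every `x`–`y` walk in `P A` is even and every `y`–`x` walk in `P B` is odd, so
`P A ⊔ P B` has an odd closed walk and therefore an odd cycle.
-/

open SimpleGraph

def IsHamPathGraph {n : ℕ} (G : SimpleGraph (Fin n)) : Prop :=
  ∃ (u v : Fin n) (p : G.Walk u v), p.IsHamiltonian ∧ G.edgeSet = {e | e ∈ p.edges}

def IsHamCycleGraph {n : ℕ} (G : SimpleGraph (Fin n)) : Prop :=
  ∃ (u : Fin n) (c : G.Walk u u), c.IsHamiltonianCycle ∧ G.edgeSet = {e | e ∈ c.edges}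

def HasCycleLen {V : Type*} (G : SimpleGraph V) (P : ℕ → Prop) : Prop :=
  ∃ (v : V) (c : G.Walk v v), c.IsCycle ∧ P c.length

def biparGraph {n : ℕ} (A : Finset (Fin n)) : SimpleGraph (Fin n) where
  Adj u v := (u ∈ A ∧ v ∉ A) ∨ (v ∈ A ∧ u ∉ A)
  symm := ⟨fun u v h => by tauto⟩
  loopless := ⟨fun u h => by tauto⟩

def almostBalanced {n : ℕ} (A : Finset (Fin n)) : Prop :=
  |(A.card : ℤ) - ((n : ℤ) - A.card)| ≤ 1

def ContainsK4 {n : ℕ} (G : SimpleGraph (Fin n)) : Prop :=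
  ∃ f : Fin 4 → Fin n, Function.Injective f ∧ ∀ i j, i ≠ j → G.Adj (f i) (f j)

open Finset

namespace SimpleGraph.Walk

variable {V : Type*} {G : SimpleGraph V}

/- Prepending an edge `uw` to a path `q` from `w` that revisits `u` splits off the closed walk
`uw ++ q.takeUntil u`, whose tail is a path: if its length is odd it is an odd cycle, otherwise
`q.dropUntil u` is a path of the right parity. -/
theorem exists_isPath_even_length_iff_or_hasCycleLen_odd {u v : V} (p : G.Walk u v) :
    (∃ q : G.Walk u v, q.IsPath ∧ (Even q.length ↔ Even p.length)) ∨ HasCycleLen G Odd := by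
  classical
  induction p with
  | nil => exact .inl ⟨nil, .nil, .rfl⟩
  | @cons u w v h p ih =>
    obtain ⟨q, hq, hpar⟩ | hodd := ih
    · by_cases hu : u ∈ q.support
      · have hlen := congrArg length (q.take_spec hu)
        rw [length_append] at hlen
        rcases Nat.even_or_odd (q.takeUntil u hu).length with ht | ht
        · right
          refine ⟨u, cons h (q.takeUntil u hu), ?_, by simpa [Nat.odd_add_one] using ht⟩
          have hnil : (q.takeUntil u hu).length ≠ 0 := fun h0 =>
            h.ne (eq_of_length_eq_zero h0).symm
          rw [isCycle_iff_isPath_tail_and_le_length]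
          refine ⟨by simpa using hq.takeUntil hu, ?_⟩
          rw [length_cons]
          obtain ⟨r, hr⟩ := ht
          omega
        · left
          refine ⟨q.dropUntil u hu, hq.dropUntil hu, ?_⟩
          rw [length_cons, Nat.even_add_one, ← hpar, ← hlen, Nat.even_add,
            ← Nat.not_odd_iff_even (n := (q.takeUntil u hu).length)]
          tauto
      · exact .inl ⟨cons h q, hq.cons hu, by simp [Nat.even_add_one, hpar]⟩
    · exact .inr hodd

theorem hasCycleLen_odd_of_odd_length {u : V} (p : G.Walk u u) (hp : Odd p.length) :
    HasCycleLen G Odd := by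
  refine p.exists_isPath_even_length_iff_or_hasCycleLen_odd.resolve_left ?_
  rintro ⟨q, hq, hpar⟩
  rw [(isPath_iff_nil.1 hq).length_eq_zero] at hpar
  exact Nat.not_even_iff_odd.2 hp (hpar.1 .zero)

end SimpleGraph.Walk

section Bipartite

variable {n : ℕ} {A : Finset (Fin n)}

theorem biparGraph_even_length_iff {u v : Fin n} (p : (biparGraph A).Walk u v) :
    Even p.length ↔ (u ∈ A ↔ v ∈ A) := by
  let c : (biparGraph A).Coloring Bool :=
    Coloring.mk (fun v => decide (v ∈ A)) fun {u v} huv => by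
      simp only [biparGraph] at huv
      simp only [ne_eq, decide_eq_decide]
      tauto
  simpa [c, Coloring.mk, decide_eq_decide] using c.even_length_iff_congr p

theorem even_length_iff_of_le_biparGraph {G : SimpleGraph (Fin n)} (hG : G ≤ biparGraph A)
    {u v : Fin n} (p : G.Walk u v) : Even p.length ↔ (u ∈ A ↔ v ∈ A) := by
  simpa using biparGraph_even_length_iff (p.mapLe hG)

theorem not_hasCycleLen_odd_of_le_biparGraph {G : SimpleGraph (Fin n)} (hG : G ≤ biparGraph A) :
    ¬HasCycleLen G Odd := by
  rintro ⟨v, c, -, hodd⟩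
  exact Nat.not_even_iff_odd.2 hodd ((even_length_iff_of_le_biparGraph hG c).2 .rfl)

theorem hasCycleLen_odd_sup_of_le_biparGraph {G H : SimpleGraph (Fin n)} {B : Finset (Fin n)}
    (hG : G.Preconnected) (hH : H.Preconnected) (hGA : G ≤ biparGraph A)
    (hHB : H ≤ biparGraph B) {x y : Fin n} (hA : x ∈ A ↔ y ∈ A) (hB : ¬(x ∈ B ↔ y ∈ B)) :
    HasCycleLen (G ⊔ H) Odd := by
  obtain ⟨p⟩ := hG x y
  obtain ⟨q⟩ := hH y x
  have hp : Even p.length := (even_length_iff_of_le_biparGraph hGA p).2 hA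
  have hq : Odd q.length := Nat.not_even_iff_odd.1 fun h =>
    hB ((even_length_iff_of_le_biparGraph hHB q).1 h).symm
  refine ((p.mapLe le_sup_left).append (q.mapLe le_sup_right)).hasCycleLen_odd_of_odd_length ?_
  simpa using hp.add_odd hq

end Bipartite

theorem IsHamPathGraph.preconnected {n : ℕ} {G : SimpleGraph (Fin n)} (hG : IsHamPathGraph G) :
    G.Preconnected := by
  obtain ⟨u, v, p, hp, -⟩ := hG
  intro a b
  exact ((p.takeUntil a (hp.mem_support a)).reachable.symm).trans
    (p.takeUntil b (hp.mem_support b)).reachable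

theorem SimpleGraph.Walk.IsHamiltonian.isHamPathGraph_spanningCoe {n : ℕ}
    {H : SimpleGraph (Fin n)} {u v : Fin n} {p : H.Walk u v} (hp : p.IsHamiltonian) :
    IsHamPathGraph p.toSubgraph.spanningCoe := by
  have hE : p.toSubgraph.spanningCoe.edgeSet = {e | e ∈ p.edges} := by
    rw [Subgraph.edgeSet_spanningCoe, Walk.edgeSet_toSubgraph, Walk.edgeSet]
  refine ⟨u, v, p.transfer _ (by simp [hE]), ?_, by rw [Walk.edges_transfer, hE]⟩
  intro w
  rw [Walk.support_transfer]
  exact hp w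

theorem IsHamPathGraph.exists_le_biparGraph {k : ℕ} {G : SimpleGraph (Fin (2 * k + 1))}
    (hG : IsHamPathGraph G) : ∃ A : Finset (Fin (2 * k + 1)), #A = k + 1 ∧ G ≤ biparGraph A := by
  obtain ⟨u, v, p, hp, hE⟩ := hG
  have hlen : p.length = 2 * k := by rw [hp.length_eq, Fintype.card_fin]; rfl
  have hinj := hp.isPath.getVert_injOn
  set A := (range (k + 1)).image fun j => p.getVert (2 * j)
  have hmem : ∀ i ≤ p.length, p.getVert i ∈ A ↔ Even i := by
    intro i hi
    simp only [A, mem_image, mem_range]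
    constructor
    · rintro ⟨j, hj, hji⟩
      have := hinj (show 2 * j ≤ p.length by omega) hi hji
      exact ⟨j, by omega⟩
    · rintro ⟨j, rfl⟩
      exact ⟨j, by omega, by congr 1; omega⟩
  refine ⟨A, ?_, ?_⟩
  · rw [card_image_of_injOn, card_range]
    intro i hi j hj hij
    simp only [coe_range, Set.mem_Iio] at hi hj
    have := hinj (show 2 * i ≤ p.length by omega) (show 2 * j ≤ p.length by omega) hij
    omega
  · intro x y hxy
    have hxy' : s(x, y) ∈ p.edges := by
      have : s(x, y) ∈ G.edgeSet := hxy
      rwa [hE] at this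
    obtain ⟨i, hi, he⟩ := p.mk_mem_edges_iff_exists.1 hxy'
    have h1 := hmem i (by omega)
    have h2 := hmem (i + 1) (by omega)
    rw [Nat.even_add_one] at h2
    simp only [biparGraph]
    rcases Sym2.eq_iff.1 he with ⟨rfl, rfl⟩ | ⟨rfl, rfl⟩ <;> tauto

theorem biparGraph_exists_isHamiltonian {k : ℕ} {A : Finset (Fin (2 * k + 1))}
    (hA : #A = k + 1) :
    ∃ (u v : Fin (2 * k + 1)) (p : (biparGraph A).Walk u v), p.IsHamiltonian := by
  have hAc : #Aᶜ = k := by rw [card_compl, Fintype.card_fin, hA]; omega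
  let a := (A.equivFinOfCardEq hA).symm
  let b := (Aᶜ.equivFinOfCardEq hAc).symm
  let f : Fin (2 * k + 1) → Fin (2 * k + 1) := fun i =>
    if h : i.val % 2 = 0 then a ⟨i / 2, by omega⟩ else b ⟨i / 2, by omega⟩
  have hf : ∀ i, f i ∈ A ↔ i.val % 2 = 0 := by
    intro i
    by_cases h : i.val % 2 = 0
    · simp [f, h]
    · simp only [f, h, dite_false, iff_false]
      exact mem_compl.1 (b _).2
  have hinj : f.Injective := by
    intro i j hij
    have hpar := (hf i).symm.trans (hij ▸ hf j)
    by_cases h : i.val % 2 = 0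
    · have hj : j.val % 2 = 0 := hpar.1 h
      simp only [f, h, hj, dite_true] at hij
      have := congrArg Fin.val (a.injective (Subtype.ext hij))
      simp only at this
      omega
    · have hj : j.val % 2 ≠ 0 := mt hpar.2 h
      simp only [f, h, hj, dite_false] at hij
      have := congrArg Fin.val (b.injective (Subtype.ext hij))
      simp only at this
      omega
  have hchain : (List.ofFn f).IsChain (biparGraph A).Adj := by
    refine List.isChain_ofFn.2 fun i hi => ?_
    simp only [biparGraph, hf]
    omega
  refine ⟨_, _, Walk.ofSupport _ (by simp) hchain, (Walk.IsPath.mk' ?_).isHamiltonian_of_mem ?_⟩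
  · rw [Walk.support_ofSupport]
    exact List.nodup_ofFn.2 hinj
  · intro v
    rw [Walk.support_ofSupport, List.mem_ofFn]
    exact Finite.injective_iff_surjective.1 hinj v

theorem exists_mem_sdiff_mem_inter_of_card_eq {α : Type*} [Fintype α] [DecidableEq α]
    {A B : Finset α} (hcard : Fintype.card α < #A + #B) (hAB : #A = #B) (hne : A ≠ B) :
    ∃ x y, x ∈ A ∧ x ∉ B ∧ y ∈ A ∧ y ∈ B := by
  obtain ⟨x, hx⟩ : (A \ B).Nonempty :=
    sdiff_nonempty.2 fun h => hne (eq_of_subset_of_card_le h hAB.ge)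
  obtain ⟨y, hy⟩ : (A ∩ B).Nonempty := by
    rw [← card_pos]
    have := card_union_add_card_inter A B
    have := card_le_univ (A ∪ B)
    omega
  exact ⟨x, y, (mem_sdiff.1 hx).1, (mem_sdiff.1 hx).2, (mem_inter.1 hy).1, (mem_inter.1 hy).2⟩

theorem ncard_setOf_card_eq {α : Type*} [Fintype α] (r : ℕ) :
    {A : Finset α | #A = r}.ncard = (Fintype.card α).choose r := by
  classical
  have hS : {A : Finset α | #A = r} = ↑(powersetCard r (univ : Finset α)) := by
    ext A
    simp
  rw [hS, Set.ncard_coe_finset, card_powersetCard, card_univ]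

section Family

variable {k : ℕ}

theorem hasCycleLen_odd_sup_of_ne {G H : SimpleGraph (Fin (2 * k + 1))}
    {A B : Finset (Fin (2 * k + 1))} (hG : IsHamPathGraph G) (hH : IsHamPathGraph H)
    (hA : #A = k + 1) (hB : #B = k + 1) (hGA : G ≤ biparGraph A) (hHB : H ≤ biparGraph B)
    (hAB : A ≠ B) : HasCycleLen (G ⊔ H) Odd := by
  obtain ⟨x, y, hxA, hxB, hyA, hyB⟩ :=
    exists_mem_sdiff_mem_inter_of_card_eq (by rw [Fintype.card_fin, hA, hB]; omega) (hA.trans hB.symm) hAB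
  exact hasCycleLen_odd_sup_of_le_biparGraph hG.preconnected hH.preconnected hGA hHB
    (iff_of_true hxA hyA) (by tauto)

theorem ncard_le_choose_of_hasCycleLen_odd {F : Set (SimpleGraph (Fin (2 * k + 1)))}
    (hF : ∀ G ∈ F, IsHamPathGraph G) (hodd : ∀ G ∈ F, ∀ H ∈ F, G ≠ H → HasCycleLen (G ⊔ H) Odd) :
    F.ncard ≤ (2 * k + 1).choose (k + 1) := by
  choose! c hc hcG using fun G hG => (hF G hG).exists_le_biparGraph
  have hinj : Set.InjOn c F := by
    intro G hG H hH hGH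
    by_contra hne
    refine not_hasCycleLen_odd_of_le_biparGraph (sup_le (hcG G hG) ?_) (hodd G hG H hH hne)
    exact hGH ▸ hcG H hH
  calc F.ncard ≤ {A : Finset (Fin (2 * k + 1)) | #A = k + 1}.ncard :=
        Set.ncard_le_ncard_of_injOn c hc hinj (Set.toFinite _)
    _ = (2 * k + 1).choose (k + 1) := by rw [ncard_setOf_card_eq, Fintype.card_fin]

theorem exists_hasCycleLen_odd_family :
    ∃ F : Set (SimpleGraph (Fin (2 * k + 1))), (∀ G ∈ F, IsHamPathGraph G) ∧
      (∀ G ∈ F, ∀ H ∈ F, G ≠ H → HasCycleLen (G ⊔ H) Odd) ∧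
      F.ncard = (2 * k + 1).choose (k + 1) := by
  have : ∀ A : Finset (Fin (2 * k + 1)), #A = k + 1 →
      ∃ G, IsHamPathGraph G ∧ G ≤ biparGraph A := fun A hA => by
    obtain ⟨u, v, p, hp⟩ := biparGraph_exists_isHamiltonian hA
    exact ⟨_, hp.isHamPathGraph_spanningCoe, p.toSubgraph.spanningCoe_le⟩
  choose! P hP hPA using this
  set S := {A : Finset (Fin (2 * k + 1)) | #A = k + 1}
  have hodd : ∀ A ∈ S, ∀ B ∈ S, A ≠ B → HasCycleLen (P A ⊔ P B) Odd := fun A hA B hB hAB =>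
    hasCycleLen_odd_sup_of_ne (hP A hA) (hP B hB) hA hB (hPA A hA) (hPA B hB) hAB
  have hinj : Set.InjOn P S := by
    intro A hA B hB hAB
    by_contra hne
    have hAA := hodd A hA B hB hne
    rw [← hAB, sup_idem] at hAA
    exact not_hasCycleLen_odd_of_le_biparGraph (hPA A hA) hAA
  refine ⟨P '' S, ?_, ?_, ?_⟩
  · rintro _ ⟨A, hA, rfl⟩
    exact hP A hA
  · rintro _ ⟨A, hA, rfl⟩ _ ⟨B, hB, rfl⟩ hne
    exact hodd A hA B hB (ne_of_apply_ne P hne)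
  · rw [hinj.ncard_image, ncard_setOf_card_eq, Fintype.card_fin]

end Family

theorem stmt4 {n : ℕ} (hn : Odd n) :
    IsGreatest {m : ℕ | ∃ F : Set (SimpleGraph (Fin n)),
      (∀ G ∈ F, IsHamPathGraph G) ∧
      (∀ G ∈ F, ∀ H ∈ F, G ≠ H → HasCycleLen (G ⊔ H) Odd) ∧
      F.ncard = m} (n.choose (n / 2)) := by
  obtain ⟨k, rfl⟩ := hn
  rw [show (2 * k + 1) / 2 = k by omega, ← Nat.choose_symm_half]
  refine ⟨exists_hasCycleLen_odd_family, ?_⟩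
  rintro m ⟨F, hF, hodd, rfl⟩
  exact ncard_le_choose_of_hasCycleLen_odd hF hodd
end

section
/- For n even, the maximum cardinality of a family of Hamiltonian paths in K_n such that the union of any two distinct members contains an odd cycle equals (1/2) * binomial(n, n/2). -/
/-
A Hamiltonian path is a tree, hence bipartite, and since it visits the vertices alternately the two
colour classes have `n / 2` vertices each when `n` is even. Being connected, it has only one
bipartition, namely the vertices at even distance from `0` and the rest; this records the path by
an `n / 2`-subset containing `0`, and there are `C(n, n / 2) / 2` of those (complementation pairs
the subsets containing `0` with those that do not).

The union of two Hamiltonian paths is bipartite exactly when their bipartitions coincide, and a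
graph is bipartite exactly when it has no odd cycle. So in an admissible family the paths have
pairwise distinct bipartitions, which gives the upper bound; conversely, choosing for each
`n / 2`-subset `S ∋ 0` a path that alternates between `S` and its complement gives a family of
that size.
-/

open SimpleGraph

open Finset

theorem Nat.card_filter_range_even (n : ℕ) : #{k ∈ range n | Even k} = (n + 1) / 2 := by
  induction n with
  | zero => rfl
  | succ n ih =>
    rw [range_add_one, filter_insert]
    split_ifs with h
    · rw [card_insert_of_notMem (by simp), ih]; grind
    · rw [ih]; grind

theorem Fin.card_filter_even (n : ℕ) : #{i : Fin n | Even (i : ℕ)} = (n + 1) / 2 := by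
  rw [← Nat.card_filter_range_even]
  refine card_nbij (↑) (fun i hi => by simpa using hi) Fin.val_injective.injOn fun k hk => ?_
  obtain ⟨hk, heven⟩ := mem_filter.mp hk
  exact ⟨⟨k, mem_range.mp hk⟩, by simpa using heven, rfl⟩

section Halves

variable {α : Type*} [Fintype α] [DecidableEq α]

def halvesContaining (a : α) : Finset (Finset α) :=
  {s ∈ powersetCard (Fintype.card α / 2) univ | a ∈ s}

theorem mem_halvesContaining {a : α} {s : Finset α} :
    s ∈ halvesContaining a ↔ #s = Fintype.card α / 2 ∧ a ∈ s := by
  simp [halvesContaining, mem_powersetCard]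

theorem card_halvesContaining (h : Even (Fintype.card α)) (a : α) :
    #(halvesContaining a) = (Fintype.card α).choose (Fintype.card α / 2) / 2 := by
  set k := Fintype.card α / 2
  have hcompl : #(halvesContaining a) = #{s ∈ powersetCard k univ | a ∉ s} := by
    refine card_nbij' compl compl ?_ ?_ (fun s _ => compl_compl s) (fun s _ => compl_compl s) <;>
    · intro s hs
      simp only [halvesContaining, coe_filter, mem_powersetCard, Set.mem_ofPred_eq, subset_univ,
        true_and, card_compl, mem_compl] at hs ⊢
      grind
  have hsplit := card_filter_add_card_filter_not (s := powersetCard k (univ : Finset α)) (a ∈ ·)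
  rw [card_powersetCard, card_univ] at hsplit
  change #(halvesContaining a) + _ = _ at hsplit
  omega

end Halves

namespace SimpleGraph

variable {V : Type*} {G H : SimpleGraph V}

theorem Walk.hasCycleLen_odd_or_exists_isPath [DecidableEq V] :
    ∀ {u v : V} (p : G.Walk u v),
      HasCycleLen G Odd ∨ ∃ q : G.Walk u v, q.IsPath ∧ (Even q.length ↔ Even p.length)
  | _, _, .nil => .inr ⟨.nil, .nil, .rfl⟩
  | a, _, .cons h p => by
    obtain hodd | ⟨q, hq, hpar⟩ := p.hasCycleLen_odd_or_exists_isPath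
    · exact .inl hodd
    by_cases ha : a ∈ q.support
    · -- `q` returns to `a`: either `h` closes an odd cycle or the rest of `q` has the right parity
      have hlen := congrArg Walk.length (q.take_spec ha)
      rw [Walk.length_append] at hlen
      rcases Nat.even_or_odd (q.takeUntil a ha).length with heven | hodd
      · refine .inl ⟨a, .cons h (q.takeUntil a ha), ?_, by simpa [Nat.odd_add_one]⟩
        refine (Walk.cons_isCycle_iff _ h).mpr ⟨hq.takeUntil ha, fun he => ?_⟩
        have := (hq.takeUntil ha).length_eq_one_of_mem_edges (Sym2.eq_swap ▸ he)
        simp [this] at heven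
      · refine .inr ⟨q.dropUntil a ha, hq.dropUntil ha, ?_⟩
        rw [← Nat.not_even_iff_odd] at hodd
        simp only [Walk.length_cons, Nat.even_add_one, ← hpar, ← hlen, Nat.even_add]
        tauto
    · exact .inr ⟨.cons h q, hq.cons ha, by simp [Nat.even_add_one, hpar]⟩

theorem hasCycleLen_odd_iff_not_colorable_two : HasCycleLen G Odd ↔ ¬ G.Colorable 2 := by
  classical
  rw [two_colorable_iff_forall_loop_even]
  constructor
  · rintro ⟨v, c, -, hodd⟩ h
    exact Nat.not_even_iff_odd.mpr hodd (h v c)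
  · intro h
    push Not at h
    obtain ⟨u, w, hw⟩ := h
    obtain hodd | ⟨q, hq, hpar⟩ := w.hasCycleLen_odd_or_exists_isPath
    · exact hodd
    · exact absurd (hpar.mp (by simp [(Walk.isPath_iff_nil.mp hq).length_eq_zero])) hw

theorem IsBipartite.nonempty_coloring_bool (h : G.IsBipartite) : Nonempty (G.Coloring Bool) :=
  .map (G.recolorOfEquiv finTwoEquiv) h

theorem Walk.IsHamiltonian.card_filter_coloring_eq [Fintype V] [DecidableEq V] {u v : V}
    {p : G.Walk u v} (hp : p.IsHamiltonian) (c : G.Coloring Bool) (hV : Even (Fintype.card V))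
    (w : V) :
    #{x | c x = c w} = Fintype.card V / 2 := by
  have halt : ∀ i ≤ p.length, (c (p.getVert i) = c u ↔ Even i) := by
    intro i hi
    have := c.even_length_iff_congr (p.take i)
    rw [Walk.take_length, min_eq_left hi] at this
    rw [this]
    cases c u <;> cases c (p.getVert i) <;> simp
  have hu : #{x | c x = c u} = Fintype.card V / 2 := by
    rw [← card_equiv hp.getVertEquiv (s := {i : Fin _ | Even (i : ℕ)}), Fin.card_filter_even,
      hp.length_support]
    · grind
    · intro i
      have : (i : ℕ) < p.length + 1 := p.length_support ▸ i.isLt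
      simp [halt i (by omega)]
  by_cases hw : c w = c u
  · rw [hw, hu]
  · have hw' : c w = !c u := Bool.eq_not.mpr hw
    have : univ.filter (c · = c w) = (univ.filter (c · = c u))ᶜ := by
      ext x
      simp only [hw', mem_filter, mem_univ, true_and, mem_compl]
      cases c x <;> cases c u <;> simp
    rw [this, card_compl, hu]
    grind

variable [Fintype V]

noncomputable def evenDistFinset (G : SimpleGraph V) (u : V) : Finset V :=
  {x | Even (G.dist u x)}

theorem Connected.mem_evenDistFinset_iff (hG : G.Connected) (c : G.Coloring Bool) {u x : V} :
    x ∈ G.evenDistFinset u ↔ c x = c u := by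
  obtain ⟨p, hp⟩ := hG.exists_walk_length_eq_dist u x
  rw [evenDistFinset, mem_filter, ← hp, c.even_length_iff_congr p]
  cases c u <;> cases c x <;> simp

theorem Connected.colorable_two_sup_iff (hG : G.Connected) (hH : H.Connected)
    (hGb : G.IsBipartite) (hHb : H.IsBipartite) (u : V) :
    (G ⊔ H).Colorable 2 ↔ G.evenDistFinset u = H.evenDistFinset u := by
  obtain ⟨cG⟩ := hGb.nonempty_coloring_bool
  obtain ⟨cH⟩ := hHb.nonempty_coloring_bool
  constructor
  · intro h
    obtain ⟨c⟩ := IsBipartite.nonempty_coloring_bool h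
    ext x
    rw [hG.mem_evenDistFinset_iff (c.comp (.ofLE le_sup_left)),
      hH.mem_evenDistFinset_iff (c.comp (.ofLE le_sup_right))]
    rfl
  · intro h
    have hGH : ∀ x, cG x = cG u ↔ cH x = cH u := fun x => by
      rw [← hG.mem_evenDistFinset_iff, ← hH.mem_evenDistFinset_iff, h]
    refine (Coloring.mk cG ?_).colorable
    rintro x y (hxy | hxy)
    · exact cG.valid hxy
    · intro hxy'
      apply cH.valid hxy
      have := (hGH x).symm.trans (hxy' ▸ hGH y)
      revert this
      cases cH x <;> cases cH y <;> cases cH u <;> simp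

end SimpleGraph

theorem SimpleGraph.Connected.evenDistFinset_eq_of_le_biparGraph {n : ℕ} {G : SimpleGraph (Fin n)}
    (hG : G.Connected) {S : Finset (Fin n)} (hS : G ≤ biparGraph S) {u : Fin n} (hu : u ∈ S) :
    G.evenDistFinset u = S := by
  let c : G.Coloring Bool := Coloring.mk (fun x => decide (x ∈ S)) fun h => by
    have := hS h
    simp only [biparGraph] at this
    grind
  ext x
  rw [hG.mem_evenDistFinset_iff c]
  show decide (x ∈ S) = decide (u ∈ S) ↔ x ∈ S
  simp [hu]

namespace IsHamPathGraph

variable {n : ℕ} {G H : SimpleGraph (Fin n)}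

theorem connected (hG : IsHamPathGraph G) : G.Connected := by
  obtain ⟨u, v, p, hp, -⟩ := hG
  exact (connected_iff_exists_forall_reachable G).mpr
    ⟨u, fun x => (p.takeUntil x (hp.mem_support x)).reachable⟩

theorem isTree (hG : IsHamPathGraph G) : G.IsTree := by
  refine isTree_iff_connected_and_card.mpr ⟨hG.connected, ?_⟩
  obtain ⟨u, v, p, hp, hE⟩ := hG
  have hcard : Nat.card G.edgeSet = p.length := by
    rw [hE, ← Walk.length_edges, ← List.toFinset_card_of_nodup hp.isPath.isTrail.edges_nodup,
      ← Set.ncard_coe_finset, List.coe_toFinset, Nat.card_coe_set_eq]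
  rw [hcard, hp.length_eq, Nat.card_eq_fintype_card]
  have := Fintype.card_pos_iff.mpr ⟨u⟩
  omega

theorem of_iso (hG : IsHamPathGraph G) (φ : G ≃g H) : IsHamPathGraph H := by
  obtain ⟨u, v, p, hp, hE⟩ := hG
  refine ⟨φ u, φ v, p.map φ.toHom, hp.map φ.toHom φ.bijective, ?_⟩
  ext e
  obtain ⟨e, rfl⟩ : ∃ e', e = e'.map φ := ⟨e.map φ.symm, by simp [Sym2.map_map]⟩
  rw [Set.mem_ofPred_eq, φ.map_mem_edgeSet_iff, hE, Set.mem_ofPred_eq, Walk.edges_map]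
  exact (List.mem_map_of_injective (Sym2.map.injective φ.injective)).symm

theorem card_evenDistFinset (hG : IsHamPathGraph G) (hn : Even n) (u : Fin n) :
    #(G.evenDistFinset u) = n / 2 := by
  obtain ⟨c⟩ := hG.isTree.isBipartite.nonempty_coloring_bool
  have hconn := hG.connected
  obtain ⟨_, _, p, hp, -⟩ := hG
  have hcard := hp.card_filter_coloring_eq c (by simpa using hn) u
  rw [Fintype.card_fin] at hcard
  rw [← hcard]
  congr 1
  ext x
  simp [hconn.mem_evenDistFinset_iff c]

theorem hasCycleLen_odd_sup_iff (hG : IsHamPathGraph G) (hH : IsHamPathGraph H) (u : Fin n) :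
    HasCycleLen (G ⊔ H) Odd ↔ G.evenDistFinset u ≠ H.evenDistFinset u := by
  rw [hasCycleLen_odd_iff_not_colorable_two, hG.connected.colorable_two_sup_iff hH.connected
    hG.isTree.isBipartite hH.isTree.isBipartite]

end IsHamPathGraph

namespace SimpleGraph.pathGraph

variable {n : ℕ}

def walkToZero : (m : Fin (n + 1)) → (pathGraph (n + 1)).Walk m ⟨0, n.succ_pos⟩
  | ⟨0, _⟩ => .nil
  | ⟨m + 1, hm⟩ => .cons (by simp [pathGraph_adj]) (walkToZero ⟨m, by omega⟩)

theorem mem_support_walkToZero {x : Fin (n + 1)} :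
    ∀ m : Fin (n + 1), x ∈ (walkToZero m).support ↔ (x : ℕ) ≤ m
  | ⟨0, _⟩ => by
    rw [walkToZero, Walk.support_nil, List.mem_singleton, Fin.ext_iff, Nat.le_zero]
  | ⟨m + 1, hm⟩ => by
    rw [walkToZero, Walk.support_cons, List.mem_cons, mem_support_walkToZero, Fin.ext_iff]
    simp only
    omega

theorem isPath_walkToZero : ∀ m : Fin (n + 1), (walkToZero m).IsPath
  | ⟨0, _⟩ => by rw [walkToZero]; exact .nil
  | ⟨m + 1, hm⟩ => by
    rw [walkToZero]
    exact (isPath_walkToZero _).cons (by rw [mem_support_walkToZero]; simp)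

theorem mk_mem_edges_walkToZero {a b : Fin (n + 1)} (hab : (a : ℕ) + 1 = b) :
    ∀ m : Fin (n + 1), (b : ℕ) ≤ m → s(a, b) ∈ (walkToZero m).edges
  | ⟨0, _⟩, hb => by simp only at hb; omega
  | ⟨m + 1, hm⟩, hb => by
    rw [walkToZero, Walk.edges_cons, List.mem_cons]
    rcases hb.eq_or_lt with hb | hb
    · left
      rw [Sym2.eq_swap]
      congr <;> ext <;> simp at hb ⊢ <;> omega
    · exact .inr (mk_mem_edges_walkToZero hab _ (by simp at hb ⊢; omega))

end SimpleGraph.pathGraph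

theorem isHamPathGraph_pathGraph (n : ℕ) : IsHamPathGraph (pathGraph (n + 1)) := by
  let p := pathGraph.walkToZero (Fin.last n)
  refine ⟨Fin.last n, _, p, (pathGraph.isPath_walkToZero _).isHamiltonian_of_mem
    fun x => (pathGraph.mem_support_walkToZero _).mpr x.is_le, ?_⟩
  ext e
  induction e using Sym2.ind with | _ a b => ?_
  refine ⟨fun h => ?_, fun h => p.edges_subset_edgeSet h⟩
  rcases pathGraph_adj.mp h with h | h
  · exact pathGraph.mk_mem_edges_walkToZero h _ b.is_le
  · exact Sym2.eq_swap ▸ pathGraph.mk_mem_edges_walkToZero h _ a.is_le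

theorem Fin.exists_perm_mem_iff_even {n : ℕ} (hn : Even n) {S : Finset (Fin n)}
    (hS : #S = n / 2) : ∃ e : Equiv.Perm (Fin n), ∀ i, e i ∈ S ↔ Even (i : ℕ) := by
  have hcard : Fintype.card {i : Fin n // Even (i : ℕ)} = Fintype.card S := by
    rw [Fintype.card_subtype, Fin.card_filter_even, Fintype.card_coe, hS]
    grind
  obtain ⟨e₁⟩ := Fintype.card_eq.mp hcard
  have hcard' : Fintype.card {i : Fin n // ¬ Even (i : ℕ)} = Fintype.card {x // x ∉ S} := by
    rw [Fintype.card_subtype_compl, Fintype.card_subtype_compl, hcard]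
  obtain ⟨e₂⟩ := Fintype.card_eq.mp hcard'
  refine ⟨e₁.subtypeCongr e₂, fun i => ?_⟩
  by_cases hi : Even (i : ℕ)
  · simp [Equiv.subtypeCongr, hi]
  · simpa [Equiv.subtypeCongr, hi] using (e₂ ⟨i, hi⟩).2

theorem exists_isHamPathGraph_le_biparGraph {n : ℕ} [NeZero n] (hn : Even n) {S : Finset (Fin n)}
    (hS : #S = n / 2) : ∃ G : SimpleGraph (Fin n), IsHamPathGraph G ∧ G ≤ biparGraph S := by
  obtain ⟨e, he⟩ := Fin.exists_perm_mem_iff_even hn hS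
  obtain ⟨k, rfl⟩ := Nat.exists_eq_succ_of_ne_zero (NeZero.ne n)
  refine ⟨(pathGraph (k + 1)).map e.toEmbedding,
    (isHamPathGraph_pathGraph k).of_iso (Iso.map e _), ?_⟩
  rintro _ _ ⟨-, a, b, hab, rfl, rfl⟩
  simp only [biparGraph, Equiv.toEmbedding_apply, he]
  rcases pathGraph_adj.mp hab with h | h <;> rw [← h] <;>
    simp [Nat.even_add_one, or_comm, Nat.even_or_odd]

theorem ncard_le_of_hasCycleLen_odd_sup {n : ℕ} [NeZero n] (hn : Even n)
    {F : Set (SimpleGraph (Fin n))} (hham : ∀ G ∈ F, IsHamPathGraph G)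
    (hodd : ∀ G ∈ F, ∀ H ∈ F, G ≠ H → HasCycleLen (G ⊔ H) Odd) :
    F.ncard ≤ n.choose (n / 2) / 2 := by
  have hmaps : ∀ G ∈ F, G.evenDistFinset 0 ∈ halvesContaining (0 : Fin n) := fun G hG =>
    mem_halvesContaining.mpr
      ⟨by simpa using (hham G hG).card_evenDistFinset hn 0, by simp [evenDistFinset]⟩
  have hinj : Set.InjOn (evenDistFinset · 0) F := fun G hG H hH h => by
    by_contra hne
    exact ((hham G hG).hasCycleLen_odd_sup_iff (hham H hH) 0).mp (hodd G hG H hH hne) h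
  calc F.ncard ≤ (halvesContaining (0 : Fin n) : Set (Finset (Fin n))).ncard :=
        Set.ncard_le_ncard_of_injOn _ hmaps hinj (Set.toFinite _)
    _ = n.choose (n / 2) / 2 := by
      rw [Set.ncard_coe_finset, card_halvesContaining (by simpa using hn), Fintype.card_fin]

theorem exists_isHamPathGraph_family {n : ℕ} [NeZero n] (hn : Even n) :
    ∃ F : Set (SimpleGraph (Fin n)), (∀ G ∈ F, IsHamPathGraph G) ∧
      (∀ G ∈ F, ∀ H ∈ F, G ≠ H → HasCycleLen (G ⊔ H) Odd) ∧
      F.ncard = n.choose (n / 2) / 2 := by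
  choose! P hPham hPle using fun S (hS : S ∈ halvesContaining (0 : Fin n)) =>
    exists_isHamPathGraph_le_biparGraph hn (by simpa using (mem_halvesContaining.mp hS).1)
  have hside : ∀ S ∈ halvesContaining (0 : Fin n), (P S).evenDistFinset 0 = S := fun S hS =>
    (hPham S hS).connected.evenDistFinset_eq_of_le_biparGraph (hPle S hS)
      (mem_halvesContaining.mp hS).2
  refine ⟨P '' halvesContaining (0 : Fin n), ?_, ?_, ?_⟩
  · rintro _ ⟨S, hS, rfl⟩
    exact hPham S hS
  · rintro _ ⟨S, hS, rfl⟩ _ ⟨S', hS', rfl⟩ hne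
    rw [(hPham S hS).hasCycleLen_odd_sup_iff (hPham S' hS') 0, hside S hS, hside S' hS']
    rintro rfl
    exact hne rfl
  · rw [Set.InjOn.ncard_image fun S hS S' hS' h => by rw [← hside S hS, ← hside S' hS', h],
      Set.ncard_coe_finset, card_halvesContaining (by simpa using hn), Fintype.card_fin]

theorem stmt5 {n : ℕ} (hn : Even n) :
    IsGreatest {m : ℕ | ∃ F : Set (SimpleGraph (Fin n)),
      (∀ G ∈ F, IsHamPathGraph G) ∧
      (∀ G ∈ F, ∀ H ∈ F, G ≠ H → HasCycleLen (G ⊔ H) Odd) ∧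
      F.ncard = m} (n.choose (n / 2) / 2) := by
  obtain rfl | hn0 := eq_or_ne n 0
  · refine ⟨⟨∅, by simp, by simp, by simp⟩, ?_⟩
    rintro m ⟨F, hF, -, rfl⟩
    have hF : F = ∅ := Set.eq_empty_of_forall_notMem fun G hG => (hF G hG).choose.elim0
    simp [hF]
  have : NeZero n := ⟨hn0⟩
  refine ⟨exists_isHamPathGraph_family hn, ?_⟩
  rintro m ⟨F, hham, hodd, rfl⟩
  exact ncard_le_of_hasCycleLen_odd_sup hn hham hodd
end

section
/- Fix a perfect matching M of K_n (n even) with each edge having one endpoint in A and one in B, for a bipartition (A,B). For each permutation of the edges of M, form a Hamiltonian path by traversing each matching edge from its A-endpoint to its B-endpoint and joining the B-endpoint of each edge to the A-endpoint of the next. Then the union of any two distinct Hamiltonian paths so obtained contains an even cycle; in fact it contains a cycle with an equal number of matching edges and linking edges. -/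
open SimpleGraph

/-- The Hamiltonian path of `K_n` obtained from the permutation `σ` of the matching edges
`{a i, b i}`: traverse the matching edges in the order given by `σ`, each from its
`A`-endpoint to its `B`-endpoint, joining the `B`-endpoint of each matching edge to the
`A`-endpoint of the next by a linking edge. -/
def matchPathGraph {n m : ℕ} (a b : Fin m → Fin n) (σ : Equiv.Perm (Fin m)) :
    SimpleGraph (Fin n) :=
  SimpleGraph.fromEdgeSet
    ({e | ∃ i : Fin m, e = s(a i, b i)} ∪
     {e | ∃ i j : Fin m, (j : ℕ) = (i : ℕ) + 1 ∧ e = s(b (σ i), a (σ j))})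

/-!
Write `x → y` when `y` immediately follows `x` in `σ` or in `τ`. If this relation had no
directed cycle, its transitive closure would be a strict order containing the linear orders
given by `σ` and by `τ`, forcing `σ = τ`. A directed cycle `x₀ → x₁ → ⋯ → x₀` lifts to the
closed walk `a x₀, b x₀, a x₁, b x₁, …, a x₀`, which traverses every matching edge from `A` to
`B` and every linking edge from `B` to `A`. Shortcutting it to a cycle keeps this orientation
(a dart and its reverse never both occur), and an oriented closed walk leaves `A` exactly as
often as it enters `A`.
-/

open Relation

namespace SimpleGraph.Walk

variable {V : Type*} {G : SimpleGraph V}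

theorem countP_darts_fst_eq_countP_darts_snd {u : V} (c : G.Walk u u) (p : V → Prop)
    [DecidablePred p] :
    c.darts.countP (fun d => p d.fst) = c.darts.countP (fun d => p d.snd) := by
  have hperm : (u :: c.darts.map (·.fst)).Perm (u :: c.darts.map (·.snd)) := by
    rw [cons_map_snd_darts, ← map_fst_darts_append]
    exact (List.perm_append_singleton _ _).symm
  simpa [List.countP_map, Function.comp_def] using
    ((List.perm_cons u).mp hperm).countP_eq (fun v => p v)

theorem exists_isCycle_of_forall_darts {r : V → V → Prop} (hr : ∀ u v, r u v → ¬ r v u)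
    {u v : V} (h : G.Adj u v) (huv : r u v) (p : G.Walk v u)
    (hp : ∀ d ∈ p.darts, r d.fst d.snd) :
    ∃ c : G.Walk u u, c.IsCycle ∧ ∀ d ∈ c.darts, r d.fst d.snd := by
  classical
  have hq : ∀ d ∈ p.bypass.darts, r d.fst d.snd :=
    fun d hd => hp d (p.darts_bypass_subset_darts hd)
  refine ⟨cons h p.bypass, (cons_isCycle_iff _ h).mpr ⟨p.bypass_isPath, fun he => ?_⟩, ?_⟩
  · obtain ⟨d, hd, hde⟩ := List.mem_map.mp he
    rcases (dart_edge_eq_iff d ⟨(u, v), h⟩).mp hde with rfl | rfl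
    · have hv : v ∈ p.bypass.support.tail := by
        rw [← map_snd_darts]
        exact List.mem_map_of_mem hd
      have hnodup := p.bypass_isPath.support_nodup
      rw [← cons_tail_support] at hnodup
      exact (List.nodup_cons.mp hnodup).1 hv
    · exact hr u v huv (hq _ hd)
  · simpa [darts_cons] using ⟨huv, hq⟩

end SimpleGraph.Walk

theorem List.Nodup.ncard_setOf_mem_and {α : Type*} {l : List α} (hl : l.Nodup) (p : α → Prop)
    [DecidablePred p] : {x | x ∈ l ∧ p x}.ncard = l.countP p := by
  classical
  rw [List.countP_eq_length_filter, ← List.toFinset_card_of_nodup (hl.filter _),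
    ← Set.ncard_coe_finset]
  congr
  ext
  simp

section Alternating

variable {α V : Type*} {G : SimpleGraph V} {a b : α → V} {R : α → α → Prop}

def AlternatingStep (a b : α → V) (R : α → α → Prop) (u v : V) : Prop :=
  (∃ x, a x = u ∧ b x = v) ∨ ∃ x y, R x y ∧ b x = u ∧ a y = v

theorem AlternatingStep.matching (x : α) : AlternatingStep a b R (a x) (b x) :=
  Or.inl ⟨x, rfl, rfl⟩

theorem AlternatingStep.linking {x y : α} (h : R x y) : AlternatingStep a b R (b x) (a y) :=
  Or.inr ⟨x, y, h, rfl, rfl⟩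

theorem AlternatingStep.not_symm (hinj : Function.Injective (Sum.elim a b))
    (hR : ∀ x, ¬ R x x) {u v : V} (h : AlternatingStep a b R u v) :
    ¬ AlternatingStep a b R v u := by
  obtain ⟨ha, hb, hab⟩ := Sum.elim_injective.mp hinj
  rcases h with ⟨x, rfl, rfl⟩ | ⟨x, y, hxy, rfl, rfl⟩ <;>
    rintro (⟨z, hz, hz'⟩ | ⟨z, w, hzw, hz, hz'⟩)
  · exact hab _ _ hz'.symm
  · obtain rfl := hb hz
    obtain rfl := ha hz'
    exact hR _ hzw
  · obtain rfl := ha hz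
    obtain rfl := hb hz'
    exact hR _ hxy
  · exact hab _ _ hz.symm

theorem AlternatingStep.mem_range_fst_iff (hab : ∀ i j, a i ≠ b j) {u v : V}
    (h : AlternatingStep a b R u v) : u ∈ Set.range a ↔ v ∉ Set.range a := by
  rcases h with ⟨x, rfl, rfl⟩ | ⟨x, y, -, rfl, rfl⟩
  · exact iff_of_true ⟨x, rfl⟩ fun ⟨z, hz⟩ => hab _ _ hz
  · exact iff_of_false (fun ⟨z, hz⟩ => hab _ _ hz) (not_not.mpr ⟨y, rfl⟩)

theorem AlternatingStep.exists_eq_matching_iff (hinj : Function.Injective (Sum.elim a b))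
    (hR : ∀ x, ¬ R x x) {u v : V} (h : AlternatingStep a b R u v) :
    (∃ i, s(u, v) = s(a i, b i)) ↔ u ∈ Set.range a := by
  obtain ⟨ha, hb, hab⟩ := Sum.elim_injective.mp hinj
  rcases h with ⟨x, rfl, rfl⟩ | ⟨x, y, hxy, rfl, rfl⟩
  · exact iff_of_true ⟨x, rfl⟩ ⟨x, rfl⟩
  · refine iff_of_false (fun ⟨i, hi⟩ => ?_) fun ⟨z, hz⟩ => hab _ _ hz
    rcases Sym2.eq_iff.mp hi with ⟨hi, -⟩ | ⟨hx, hy⟩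
    · exact hab _ _ hi.symm
    · obtain rfl := hb hx
      obtain rfl := ha hy
      exact hR _ hxy

theorem exists_walk_forall_alternatingStep_of_transGen (hm : ∀ x, G.Adj (a x) (b x))
    (hl : ∀ x y, R x y → G.Adj (b x) (a y)) {x y : α} (h : TransGen R x y) :
    ∃ p : G.Walk (b x) (a y), ∀ d ∈ p.darts, AlternatingStep a b R d.fst d.snd := by
  induction h using TransGen.head_induction_on with
  | single hxy =>
    exact ⟨.cons (hl _ _ hxy) .nil, by simpa using .linking hxy⟩
  | head hxz _ ih =>
    obtain ⟨p, hp⟩ := ih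
    exact ⟨.cons (hl _ _ hxz) (.cons (hm _) p),
      by simpa using ⟨.linking hxz, .matching _, hp⟩⟩

theorem exists_isCycle_forall_alternatingStep_of_transGen
    (hinj : Function.Injective (Sum.elim a b)) (hR : ∀ x, ¬ R x x) (hm : ∀ x, G.Adj (a x) (b x))
    (hl : ∀ x y, R x y → G.Adj (b x) (a y)) {x : α} (h : TransGen R x x) :
    ∃ (u : V) (c : G.Walk u u), c.IsCycle ∧
      ∀ d ∈ c.darts, AlternatingStep a b R d.fst d.snd := by
  obtain ⟨p, hp⟩ := exists_walk_forall_alternatingStep_of_transGen hm hl h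
  exact ⟨a x, Walk.exists_isCycle_of_forall_darts (r := AlternatingStep a b R)
    (fun _ _ => AlternatingStep.not_symm hinj hR) (hm x) (.matching x) p hp⟩

theorem even_length_and_ncard_eq_of_forall_alternatingStep
    (hinj : Function.Injective (Sum.elim a b)) (hR : ∀ x, ¬ R x x) {u : V} (c : G.Walk u u)
    (hc : c.edges.Nodup) (hcd : ∀ d ∈ c.darts, AlternatingStep a b R d.fst d.snd) :
    Even c.length ∧
      {e | e ∈ c.edges ∧ ∃ i, e = s(a i, b i)}.ncard =
        {e | e ∈ c.edges ∧ ¬ ∃ i, e = s(a i, b i)}.ncard := by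
  classical
  have hcount : c.edges.countP (fun e => ∃ i, e = s(a i, b i)) =
      c.edges.countP (fun e => ¬ ∃ i, e = s(a i, b i)) := by
    simp only [Walk.edges, List.countP_map]
    calc _ = c.darts.countP (fun d => d.fst ∈ Set.range a) :=
          List.countP_congr fun d hd => by
            simp only [Function.comp_apply, decide_eq_true_eq]
            exact (hcd d hd).exists_eq_matching_iff hinj hR
      _ = c.darts.countP (fun d => d.snd ∈ Set.range a) :=
          c.countP_darts_fst_eq_countP_darts_snd _
      _ = _ :=
          List.countP_congr fun d hd => by
            have hmatch := (hcd d hd).exists_eq_matching_iff hinj hR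
            have hfst := (hcd d hd).mem_range_fst_iff (Sum.elim_injective.mp hinj).2.2
            simp only [Function.comp_apply, decide_eq_true_eq]
            exact ⟨fun hv hm => hfst.mp (hmatch.mp hm) hv,
              fun hm => not_not.mp fun hv => hm (hmatch.mpr (hfst.mpr hv))⟩
  refine ⟨⟨c.edges.countP (fun e => ¬ ∃ i, e = s(a i, b i)), ?_⟩, ?_⟩
  · rw [← Walk.length_edges, List.length_eq_countP_add_countP (fun e => ∃ i, e = s(a i, b i)),
      hcount]
    simp only [decide_eq_true_eq]
  · rw [hc.ncard_setOf_mem_and, hc.ncard_setOf_mem_and, hcount]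

end Alternating

section Permutations

variable {m : ℕ}

def IsNext (σ : Equiv.Perm (Fin m)) (x y : Fin m) : Prop :=
  ∃ i j : Fin m, (j : ℕ) = i + 1 ∧ σ i = x ∧ σ j = y

theorem IsNext.irrefl {σ : Equiv.Perm (Fin m)} (x : Fin m) : ¬ IsNext σ x x := by
  rintro ⟨i, j, hij, rfl, hj⟩
  have := congrArg Fin.val (σ.injective hj)
  omega

theorem transGen_isNext_of_lt (σ : Equiv.Perm (Fin m)) {i j : Fin m} (h : i < j) :
    TransGen (IsNext σ) (σ i) (σ j) := by
  refine TransGen.lift σ (fun _ _ h => h) _ _ (transGen_of_succ_of_lt _ (fun k hk => ?_) h)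
  have hsucc := Nat.covBy_iff_add_one_eq.mp
    (Order.covBy_succ_of_not_isMax (not_isMax_of_lt hk.2)).coe_fin
  exact ⟨k, Order.succ k, hsucc.symm, rfl, rfl⟩

theorem eq_of_forall_not_transGen_isNext_self {σ τ : Equiv.Perm (Fin m)}
    (h : ∀ x, ¬ TransGen (IsNext σ ⊔ IsNext τ) x x) : σ = τ := by
  have hσ : ∀ {i j}, i < j → TransGen (IsNext σ ⊔ IsNext τ) (σ i) (σ j) :=
    fun hij => TransGen.mono le_sup_left _ _ (transGen_isNext_of_lt σ hij)
  have hτ : ∀ {i j}, i < j → TransGen (IsNext σ ⊔ IsNext τ) (τ i) (τ j) :=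
    fun hij => TransGen.mono le_sup_right _ _ (transGen_isNext_of_lt τ hij)
  have hmono : StrictMono (σ.symm ∘ τ) := by
    intro i j hij
    by_contra! hle
    rcases hle.lt_or_eq with hlt | heq
    · have hback := hσ hlt
      simp only [Function.comp_apply, Equiv.apply_symm_apply] at hback
      exact h _ ((hτ hij).trans hback)
    · exact hij.ne (by simpa using heq.symm)
  refine Equiv.ext fun i => ?_
  simpa using (congrArg σ (congrFun hmono.eq_id i)).symm

end Permutations

section MatchPathGraph

variable {n m : ℕ} {a b : Fin m → Fin n}

theorem matchPathGraph_adj_matching (hab : ∀ i j, a i ≠ b j) (σ : Equiv.Perm (Fin m))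
    (x : Fin m) : (matchPathGraph a b σ).Adj (a x) (b x) := by
  rw [matchPathGraph, fromEdgeSet_adj]
  exact ⟨Or.inl ⟨x, rfl⟩, by simpa using hab x x⟩

theorem matchPathGraph_adj_of_isNext (hab : ∀ i j, a i ≠ b j) {σ : Equiv.Perm (Fin m)}
    {x y : Fin m} (h : IsNext σ x y) : (matchPathGraph a b σ).Adj (b x) (a y) := by
  obtain ⟨i, j, hij, rfl, rfl⟩ := h
  rw [matchPathGraph, fromEdgeSet_adj]
  exact ⟨Or.inr ⟨i, j, hij, rfl⟩, by simpa using (hab _ _).symm⟩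

end MatchPathGraph

theorem stmt14_general {n m : ℕ}
    (a b : Fin m → Fin n)
    (hM : Function.Bijective (Sum.elim a b)) -- `{a i, b i}` form a perfect matching, with bipartition `(range a, range b)`
    (σ τ : Equiv.Perm (Fin m)) (hst : σ ≠ τ) :
    ∃ (v : Fin n) (w : (matchPathGraph a b σ ⊔ matchPathGraph a b τ).Walk v v),
      w.IsCycle ∧ Even w.length ∧
      {e | e ∈ w.edges ∧ ∃ i : Fin m, e = s(a i, b i)}.ncard =
        {e | e ∈ w.edges ∧ ¬ ∃ i : Fin m, e = s(a i, b i)}.ncard := by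
  set R := IsNext σ ⊔ IsNext τ
  have hR : ∀ x, ¬ R x x := fun x hx => hx.elim (IsNext.irrefl x) (IsNext.irrefl x)
  obtain ⟨x, hx⟩ : ∃ x, TransGen R x x := by
    by_contra! h
    exact hst (eq_of_forall_not_transGen_isNext_self h)
  have hab := (Sum.elim_injective.mp hM.1).2.2
  obtain ⟨v, c, hc, hcd⟩ := exists_isCycle_forall_alternatingStep_of_transGen
    (G := matchPathGraph a b σ ⊔ matchPathGraph a b τ) hM.1 hR
    (fun x => Or.inl (matchPathGraph_adj_matching hab σ x))
    (fun _ _ hxy => hxy.imp (matchPathGraph_adj_of_isNext hab) (matchPathGraph_adj_of_isNext hab))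
    hx
  exact ⟨v, c, hc,
    even_length_and_ncard_eq_of_forall_alternatingStep hM.1 hR c hc.edges_nodup hcd⟩

theorem stmt14 {n m : ℕ} (hnm : n = 2 * m)
    (a b : Fin m → Fin n)
    (hM : Function.Bijective (Sum.elim a b)) -- `{a i, b i}` form a perfect matching, with bipartition `(range a, range b)`
    (σ τ : Equiv.Perm (Fin m)) (hst : σ ≠ τ) :
    ∃ (v : Fin n) (w : (matchPathGraph a b σ ⊔ matchPathGraph a b τ).Walk v v),
      w.IsCycle ∧ Even w.length ∧
      {e | e ∈ w.edges ∧ ∃ i : Fin m, e = s(a i, b i)}.ncard =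
        {e | e ∈ w.edges ∧ ¬ ∃ i : Fin m, e = s(a i, b i)}.ncard :=
  stmt14_general a b hM σ τ hst
end

section
/- For every integer c with c dividing n and c ≥ 2, there exists a family of at least (n/c - 1)! Hamiltonian paths in K_n such that the union of any two distinct members contains a cycle of length congruent to 2 modulo c (in particular, a cycle whose length is not divisible by c when c > 2). -/
open SimpleGraph

/-!
Partition the vertices into `n / c` blocks of `c` consecutive vertices. Each ordering of the blocks
that keeps block `0` first gives a Hamiltonian path running through every block in increasing order.
If two such orderings `σ ≠ τ` first differ at position `k ≥ 1`, and block `σ k` sits at position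
`j > k` in `τ`, then the edge by which the path of `σ` enters block `σ k` closes the segment of the
path of `τ` from the last vertex of block `τ (k - 1) = σ (k - 1)` to the first vertex of block
`τ j = σ k`: a cycle of length `c (j - k) + 2`. Since a Hamiltonian path spans a tree, the same
cycle shows that distinct orderings give distinct paths, so there are `(n / c - 1)!` of them.
-/

namespace SimpleGraph.Walk

variable {V : Type*} {G : SimpleGraph V}

lemma IsPath.isCycle_cons {u v : V} {p : G.Walk v u} (hp : p.IsPath) (h : G.Adj u v)
    (hlen : 2 ≤ p.length) : (cons h p).IsCycle := by
  rw [isCycle_iff_isPath_tail_and_le_length]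
  refine ⟨?_, by simp only [length_cons]; omega⟩
  simpa using hp

lemma IsPath.exists_isPath_getVert {u v : V} {p : G.Walk u v} (hp : p.IsPath) {i j : ℕ}
    (hij : i ≤ j) (hj : j ≤ p.length) :
    ∃ q : G.Walk (p.getVert i) (p.getVert j), q.IsPath ∧ q.length = j - i := by
  have hend : (p.drop i).getVert (j - i) = p.getVert j := by
    rw [drop_getVert, Nat.add_sub_cancel' hij]
  refine ⟨((p.drop i).take (j - i)).copy rfl hend, ?_, ?_⟩
  · simpa using (hp.drop i).take (j - i)
  · simp only [length_copy, take_length, drop_length]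
    omega

lemma IsPath.hasCycleLen_of_adj {u v : V} {p : G.Walk u v} (hp : p.IsPath) {i j : ℕ}
    (hij : i + 2 ≤ j) (hj : j ≤ p.length) (h : G.Adj (p.getVert j) (p.getVert i))
    {P : ℕ → Prop} (hP : P (j - i + 1)) : HasCycleLen G P := by
  obtain ⟨q, hq, hlen⟩ := hp.exists_isPath_getVert (by omega : i ≤ j) hj
  exact ⟨_, cons h q, hq.isCycle_cons h (by omega), by simpa [hlen] using hP⟩

end SimpleGraph.Walk

namespace SimpleGraph

lemma exists_isHamiltonian_pathGraph {N : ℕ} (hN : 0 < N) :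
    ∃ (u v : Fin N) (p : (pathGraph N).Walk u v),
      p.IsHamiltonian ∧ ∀ i : Fin N, p.getVert i = i := by
  have hne : List.finRange N ≠ [] := by simp; omega
  have hchain : (List.finRange N).IsChain (pathGraph N).Adj := by
    refine List.isChain_iff_getElem.mpr fun i hi => ?_
    simp [pathGraph_adj]
  refine ⟨_, _, Walk.ofSupport _ hne hchain, fun v => ?_, fun i => ?_⟩
  · simp [List.count_eq_one_of_mem (List.nodup_finRange N) (List.mem_finRange v)]
  · rw [Walk.getVert_eq_support_getElem _ (by simp; omega)]
    simp

end SimpleGraph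

lemma isHamPathGraph_pathGraph_s15 {N : ℕ} (hN : 0 < N) : IsHamPathGraph (pathGraph N) := by
  obtain ⟨u, v, p, hp, hget⟩ := exists_isHamiltonian_pathGraph hN
  refine ⟨u, v, p, hp, Set.Subset.antisymm (fun e he => ?_) fun e he => p.edges_subset_edgeSet he⟩
  have hlen : p.length = N - 1 := by simpa using hp.length_eq
  induction e using Sym2.ind with | _ x y => ?_
  wlog hxy : x.val + 1 = y.val generalizing x y
  · rw [Sym2.eq_swap]
    exact this y x (by rwa [Sym2.eq_swap]) (by simpa [pathGraph_adj, hxy] using he)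
  refine (Walk.mk_mem_edges_iff_exists p).mpr ⟨x, by omega, ?_⟩
  rw [hget x, hxy, hget y]

lemma IsHamPathGraph.map {n : ℕ} {G : SimpleGraph (Fin n)} (h : IsHamPathGraph G)
    (e : Fin n ≃ Fin n) : IsHamPathGraph (G.map e) := by
  obtain ⟨u, v, p, hp, hE⟩ := h
  refine ⟨_, _, p.map (Iso.map e G).toHom, hp.map _ (Iso.map e G).bijective, ?_⟩
  have hmap := edgeSet_map e.toEmbedding G
  rw [Equiv.coe_toEmbedding] at hmap
  rw [hmap, hE, Walk.edges_map]
  ext x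
  simp
  rfl

lemma IsHamPathGraph.isAcyclic {n : ℕ} {G : SimpleGraph (Fin n)} (h : IsHamPathGraph G) :
    G.IsAcyclic := by
  classical
  obtain ⟨u, v, p, hp, hE⟩ := h
  have hconn : G.Connected :=
    { preconnected a b := ((p.takeUntil a (hp.mem_support a)).reverse.append
        (p.takeUntil b (hp.mem_support b))).reachable
      nonempty := ⟨u⟩ }
  have hcard : Nat.card G.edgeSet + 1 = Nat.card (Fin n) := by
    have hlen := hp.length_eq
    rw [Fintype.card_fin] at hlen
    rw [hE, ← List.coe_toFinset, Nat.card_coe_set_eq, Set.ncard_coe_finset,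
      List.toFinset_card_of_nodup hp.isPath.isTrail.edges_nodup, Walk.length_edges, hlen,
      Nat.card_fin]
    have := u.pos
    omega
  exact (isTree_iff_connected_and_card.mpr ⟨hconn, hcard⟩).isAcyclic

lemma hasCycleLen_sup_map_pathGraph {V : Type*} {N : ℕ} (f g : Fin N ↪ V) {a a' b : Fin N}
    (ha' : a'.val = a.val + 1) (hab : a.val + 2 ≤ b.val) (h₁ : f a = g a) (h₂ : f a' = g b)
    {P : ℕ → Prop} (hP : P (b.val - a.val + 1)) :
    HasCycleLen ((pathGraph N).map f ⊔ (pathGraph N).map g) P := by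
  obtain ⟨u, v, p, hp, hget⟩ := exists_isHamiltonian_pathGraph a.pos
  let φ : pathGraph N →g (pathGraph N).map f ⊔ (pathGraph N).map g :=
    (Hom.ofLE le_sup_right).comp (Embedding.map g _).toHom
  have hq : (p.map φ).IsPath := hp.isPath.map fun _ _ h => g.injective h
  have hgetq (i : Fin N) : (p.map φ).getVert i = g i := by
    rw [Walk.getVert_map, hget i]
    rfl
  have hlen : (p.map φ).length = N - 1 := by simpa using hp.length_eq
  refine hq.hasCycleLen_of_adj hab (by omega) ?_ hP
  rw [hgetq, hgetq, ← h₁, ← h₂]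
  exact Or.inl (map_adj_apply.mpr (pathGraph_adj.mpr (Or.inr ha'.symm)))

open Equiv

section Blocks

/-- Position `c q + r` of the path is sent to vertex `c σ(q) + r`: the path runs through the
blocks `{c q, …, c q + c - 1}` in the order `σ 0, σ 1, …`, each block in increasing order. -/
def blockPerm {m : ℕ} (c : ℕ) (σ : Perm (Fin m)) : Perm (Fin (m * c)) :=
  finProdFinEquiv.permCongr (σ.prodCongr (Equiv.refl (Fin c)))

def blockPathGraph {m : ℕ} (c : ℕ) (σ : Perm (Fin m)) : SimpleGraph (Fin (m * c)) :=
  (pathGraph (m * c)).map (blockPerm c σ)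

variable {m c : ℕ}

lemma blockPerm_apply (σ : Perm (Fin m)) (q : Fin m) (r : Fin c) :
    blockPerm c σ (finProdFinEquiv (q, r)) = finProdFinEquiv (σ q, r) := by
  simp [blockPerm]

lemma blockPerm_eq_of_lt {σ τ : Perm (Fin m)} {k : ℕ} (hk : ∀ q : Fin m, q.val < k → σ q = τ q)
    (i : Fin (m * c)) (hi : i.val < c * k) : blockPerm c σ i = blockPerm c τ i := by
  obtain ⟨⟨q, r⟩, rfl⟩ := finProdFinEquiv.surjective i
  have hq : c * q.val < c * k := by simp at hi; omega
  rw [blockPerm_apply, blockPerm_apply, hk q (Nat.lt_of_mul_lt_mul_left hq)]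

lemma isHamPathGraph_blockPathGraph (hmc : 0 < m * c) (σ : Perm (Fin m)) :
    IsHamPathGraph (blockPathGraph c σ) :=
  (isHamPathGraph_pathGraph_s15 hmc).map _

lemma hasCycleLen_sup_blockPathGraph (hc : 0 < c) {σ τ : Perm (Fin (m + 1))} (h0 : σ 0 = τ 0)
    (hστ : σ ≠ τ) :
    HasCycleLen (blockPathGraph c σ ⊔ blockPathGraph c τ) (fun l => l % c = 2 % c) := by
  obtain ⟨k, hk⟩ := exists_minimal_of_wellFoundedLT (fun q => σ q ≠ τ q)
    (not_forall.mp fun h => hστ (Equiv.ext h))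
  have hmin (q : Fin (m + 1)) (hq : q.val < k.val) : σ q = τ q :=
    not_not.mp (hk.not_prop_of_lt hq)
  have hk0 : k.val ≠ 0 := fun h => hk.prop (by rwa [show k = 0 from Fin.ext h])
  obtain ⟨j, hτj⟩ := τ.surjective (σ k)
  have hkj : k < j := by
    rcases lt_trichotomy k j with h | rfl | h
    · exact h
    · exact absurd hτj.symm hk.prop
    · exact absurd (σ.injective ((hmin j h).trans hτj)) h.ne
  have hk1 : 1 ≤ c * k.val := Nat.one_le_iff_ne_zero.mpr (Nat.mul_ne_zero hc.ne' hk0)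
  have hkj_mul : c * k.val + c ≤ c * j.val := by
    simpa [Nat.mul_succ] using Nat.mul_le_mul_left c (Nat.succ_le_of_lt (Fin.lt_def.mp hkj))
  have hj_mul : c * j.val + c ≤ (m + 1) * c := by
    simpa [Nat.mul_succ, Nat.mul_comm] using Nat.mul_le_mul_left c (Nat.succ_le_of_lt j.isLt)
  have hstart (q : Fin (m + 1)) : (finProdFinEquiv (q, (⟨0, hc⟩ : Fin c))).val = c * q.val := by
    simp
  obtain ⟨a, ha⟩ : ∃ a : Fin ((m + 1) * c), a.val = c * k.val - 1 := ⟨⟨_, by omega⟩, rfl⟩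
  refine hasCycleLen_sup_map_pathGraph (blockPerm c σ).toEmbedding (blockPerm c τ).toEmbedding
    (a := a) (a' := finProdFinEquiv (k, ⟨0, hc⟩))
    (b := finProdFinEquiv (j, ⟨0, hc⟩)) ?_ ?_ (blockPerm_eq_of_lt hmin _ (by omega)) ?_ ?_
  · rw [hstart]; omega
  · rw [hstart]; omega
  · simp [blockPerm_apply, hτj]
  · show ((finProdFinEquiv (j, (⟨0, hc⟩ : Fin c))).val - a.val + 1) % c = 2 % c
    rw [hstart, ha, show c * j.val - (c * k.val - 1) + 1 = 2 + c * (j.val - k.val) by rw [Nat.mul_sub]; omega,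
      Nat.add_mul_mod_self_left]

end Blocks

theorem stmt15_general {n c : ℕ} (hn : 0 < n) (hcn : c ∣ n) :
    ∃ F : Set (SimpleGraph (Fin n)),
      (∀ G ∈ F, IsHamPathGraph G) ∧
      (∀ G ∈ F, ∀ H ∈ F, G ≠ H → HasCycleLen (G ⊔ H) (fun l => l % c = 2 % c)) ∧
      (n / c - 1).factorial ≤ F.ncard := by
  obtain ⟨m, rfl⟩ : ∃ m, n = (m + 1) * c := by
    obtain ⟨k, rfl⟩ := hcn
    obtain ⟨m, rfl⟩ := Nat.exists_eq_succ_of_ne_zero (Nat.pos_of_mul_pos_left hn).ne'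
    exact ⟨m, Nat.mul_comm _ _⟩
  have hc : 0 < c := Nat.pos_of_mul_pos_left hn
  let family (τ : Perm (Fin m)) := blockPathGraph c (Perm.decomposeFin.symm (0, τ))
  have hcycle (σ τ : Perm (Fin m)) (hστ : σ ≠ τ) :
      HasCycleLen (family σ ⊔ family τ) (fun l => l % c = 2 % c) :=
    hasCycleLen_sup_blockPathGraph hc (by simp)
      (Perm.decomposeFin.symm.injective.ne (by simpa using hστ))
  have hinj : Function.Injective family := by
    intro σ τ h
    by_contra hστ
    have hcyc := hcycle σ τ hστ
    rw [h, sup_idem] at hcyc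
    obtain ⟨v, w, hw, -⟩ := hcyc
    exact (isHamPathGraph_blockPathGraph hn _).isAcyclic w hw
  refine ⟨Set.range family, ?_, ?_, ?_⟩
  · rintro _ ⟨σ, rfl⟩
    exact isHamPathGraph_blockPathGraph hn _
  · rintro _ ⟨σ, rfl⟩ _ ⟨τ, rfl⟩ hne
    exact hcycle σ τ (ne_of_apply_ne family hne)
  · rw [Set.ncard_range_of_injective hinj, Nat.card_perm, Nat.card_fin, Nat.mul_div_cancel _ hc]
    simp

theorem stmt15 {n c : ℕ} (hc : 2 ≤ c) (hn : 0 < n) (hcn : c ∣ n) :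
    ∃ F : Set (SimpleGraph (Fin n)),
      (∀ G ∈ F, IsHamPathGraph G) ∧
      (∀ G ∈ F, ∀ H ∈ F, G ≠ H → HasCycleLen (G ⊔ H) (fun l => l % c = 2 % c)) ∧
      (n / c - 1).factorial ≤ F.ncard :=
  stmt15_general hn hcn
end

section
/- If the union of two Hamiltonian paths of K_n contains a copy of K_4, then the union is not 3-colorable; consequently at most one member of a family of pairwise K_4-union Hamiltonian paths can be a subgraph of any fixed complete tripartite graph, and M(n, K_4) ≤ (n+1)^2 * (3/2)^(n-1). -/
open SimpleGraph

/-- The complete tripartite graph on `Fin n` determined by the partition of the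
vertices into the three fibers of `f`. -/
def tripartiteGraph {n : ℕ} (f : Fin n → Fin 3) : SimpleGraph (Fin n) where
  Adj u v := f u ≠ f v
  symm := ⟨fun u v h => h.symm⟩
  loopless := ⟨fun u h => h rfl⟩

/-! A proper 3-colouring `f` of `G` is the same as `G ≤ tripartiteGraph f`. Colouring the
`i`-th vertex of a Hamiltonian path by a partial sum in `Fin 3` of steps each equal to `1` or `2`
gives `2 ^ (n - 1)` distinct proper colourings. If two members of the family had a common
colouring, their union would be 3-colourable, which a graph containing `K₄` is not. So the
colourings of the members are pairwise disjoint sets of maps `Fin n → Fin 3`, whence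
`|F| * 2 ^ (n - 1) ≤ 3 ^ n`. -/

open Finset

section PrefixColor

def prefixColor (S : Finset ℕ) (i : ℕ) : Fin 3 :=
  ∑ j ∈ range i, if j ∈ S then 1 else 2

variable (S : Finset ℕ) (i : ℕ)

lemma prefixColor_succ :
    prefixColor S (i + 1) = prefixColor S i + if i ∈ S then 1 else 2 :=
  sum_range_succ _ _

lemma prefixColor_succ_ne : prefixColor S (i + 1) ≠ prefixColor S i := by
  rw [prefixColor_succ, Ne, add_eq_left]
  split_ifs <;> decide

lemma mem_iff_mem_of_prefixColor_eq {T : Finset ℕ} (h₀ : prefixColor S i = prefixColor T i)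
    (h₁ : prefixColor S (i + 1) = prefixColor T (i + 1)) : i ∈ S ↔ i ∈ T := by
  rw [prefixColor_succ, prefixColor_succ, h₀, add_left_cancel_iff] at h₁
  split_ifs at h₁ <;> simp_all

end PrefixColor

namespace SimpleGraph.Walk

variable {V : Type*} [DecidableEq V] {G : SimpleGraph V} {u v : V} {p : G.Walk u v}

lemma IsPath.idxOf_getVert (hp : p.IsPath) {i : ℕ} (hi : i ≤ p.length) :
    p.support.idxOf (p.getVert i) = i := by
  rw [p.getVert_eq_support_getElem hi, hp.support_nodup.idxOf_getElem]

def pathColoring (p : G.Walk u v) (S : Finset ℕ) (w : V) : Fin 3 :=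
  prefixColor S (p.support.idxOf w)

lemma IsPath.pathColoring_ne_of_mem_edges (hp : p.IsPath) (S : Finset ℕ) {x y : V}
    (hxy : s(x, y) ∈ p.edges) : p.pathColoring S x ≠ p.pathColoring S y := by
  obtain ⟨i, hi, he⟩ := p.mk_mem_edges_iff_exists.1 hxy
  have hcolor : p.pathColoring S (p.getVert i) ≠ p.pathColoring S (p.getVert (i + 1)) := by
    rw [pathColoring, pathColoring, hp.idxOf_getVert hi.le, hp.idxOf_getVert hi]
    exact (prefixColor_succ_ne S i).symm
  rcases Sym2.eq_iff.1 he with ⟨rfl, rfl⟩ | ⟨rfl, rfl⟩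
  · exact hcolor
  · exact hcolor.symm

lemma IsPath.injOn_pathColoring (hp : p.IsPath) :
    Set.InjOn p.pathColoring ((range p.length).powerset : Set (Finset ℕ)) := by
  intro S hS T hT hST
  simp only [coe_powerset, Set.mem_preimage, Set.mem_powerset_iff, coe_subset] at hS hT
  ext i
  by_cases hi : i < p.length
  · refine mem_iff_mem_of_prefixColor_eq S i ?_ ?_
    · simpa only [pathColoring, hp.idxOf_getVert hi.le] using congrFun hST (p.getVert i)
    · simpa only [pathColoring, hp.idxOf_getVert hi] using congrFun hST (p.getVert (i + 1))
  · exact iff_of_false (fun h => hi (mem_range.1 (hS h))) (fun h => hi (mem_range.1 (hT h)))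

end SimpleGraph.Walk

section Tripartite

variable {n : ℕ}

lemma tripartiteGraph_colorable (f : Fin n → Fin 3) : (tripartiteGraph f).Colorable 3 :=
  ⟨Coloring.mk f id⟩

lemma ContainsK4.not_colorable_three {G : SimpleGraph (Fin n)} (h : ContainsK4 G) :
    ¬ G.Colorable 3 := by
  obtain ⟨f, -, hadj⟩ := h
  intro hc
  simpa using hc.card_le_of_pairwise_adj f hadj

open Classical in
noncomputable def properThreeColorings (G : SimpleGraph (Fin n)) : Finset (Fin n → Fin 3) :=
  univ.filter fun f => G ≤ tripartiteGraph f

lemma mem_properThreeColorings {G : SimpleGraph (Fin n)} {f : Fin n → Fin 3} :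
    f ∈ properThreeColorings G ↔ G ≤ tripartiteGraph f := by
  simp [properThreeColorings]

lemma two_pow_length_le_card_properThreeColorings {G : SimpleGraph (Fin n)} {u v : Fin n}
    {p : G.Walk u v} (hp : p.IsPath) (hG : G.edgeSet ⊆ {e | e ∈ p.edges}) :
    2 ^ p.length ≤ #(properThreeColorings G) := by
  have hproper (S : Finset ℕ) : p.pathColoring S ∈ properThreeColorings G :=
    mem_properThreeColorings.2 fun _ _ hxy => hp.pathColoring_ne_of_mem_edges S (hG hxy)
  calc 2 ^ p.length = #(range p.length).powerset := by rw [card_powerset, card_range]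
    _ ≤ #(properThreeColorings G) :=
      card_le_card_of_injOn _ (fun S _ => hproper S) hp.injOn_pathColoring

lemma IsHamPathGraph.two_pow_le_card_properThreeColorings {G : SimpleGraph (Fin n)}
    (hG : IsHamPathGraph G) : 2 ^ (n - 1) ≤ #(properThreeColorings G) := by
  obtain ⟨u, v, p, hp, hedges⟩ := hG
  simpa [hp.length_eq] using
    two_pow_length_le_card_properThreeColorings hp.isPath hedges.subset

variable {F : Set (SimpleGraph (Fin n))}

lemma eq_of_le_tripartiteGraph (hF : ∀ G ∈ F, ∀ H ∈ F, G ≠ H → ContainsK4 (G ⊔ H))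
    {G H : SimpleGraph (Fin n)} {f : Fin n → Fin 3} (hG : G ∈ F) (hH : H ∈ F)
    (hGf : G ≤ tripartiteGraph f) (hHf : H ≤ tripartiteGraph f) : G = H := by
  by_contra hne
  exact (hF G hG H hH hne).not_colorable_three
    ((tripartiteGraph_colorable f).mono_left (sup_le hGf hHf))

lemma ncard_mul_two_pow_le (hF : ∀ G ∈ F, ∀ H ∈ F, G ≠ H → ContainsK4 (G ⊔ H))
    (hHam : ∀ G ∈ F, IsHamPathGraph G) : F.ncard * 2 ^ (n - 1) ≤ 3 ^ n := by
  set Fs := F.toFinite.toFinset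
  have hdisj : (Fs : Set (SimpleGraph (Fin n))).PairwiseDisjoint properThreeColorings := by
    intro G hG H hH hne
    refine disjoint_left.2 fun f hfG hfH => hne ?_
    simp only [Fs, Set.Finite.coe_toFinset] at hG hH
    exact eq_of_le_tripartiteGraph hF hG hH
      (mem_properThreeColorings.1 hfG) (mem_properThreeColorings.1 hfH)
  calc F.ncard * 2 ^ (n - 1) = ∑ _G ∈ Fs, 2 ^ (n - 1) := by
        rw [sum_const, smul_eq_mul, Set.ncard_eq_toFinset_card F]
    _ ≤ ∑ G ∈ Fs, #(properThreeColorings G) := sum_le_sum fun G hG =>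
        (hHam G (F.toFinite.mem_toFinset.1 hG)).two_pow_le_card_properThreeColorings
    _ = #(Fs.biUnion properThreeColorings) := (card_biUnion hdisj).symm
    _ ≤ #(univ : Finset (Fin n → Fin 3)) := card_le_univ _
    _ = 3 ^ n := by simp

end Tripartite

lemma three_pow_le_sq_mul_three_pow_pred (n : ℕ) : 3 ^ n ≤ (n + 1) ^ 2 * 3 ^ (n - 1) := by
  cases n with
  | zero => simp
  | succ k =>
    rw [pow_succ', Nat.add_sub_cancel]
    exact Nat.mul_le_mul_right _ (by nlinarith [Nat.zero_le k])

theorem stmt19 {n : ℕ} :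
    (∀ P Q : SimpleGraph (Fin n), IsHamPathGraph P → IsHamPathGraph Q →
      ContainsK4 (P ⊔ Q) → ¬ (P ⊔ Q).Colorable 3) ∧
    (∀ F : Set (SimpleGraph (Fin n)),
      (∀ G ∈ F, IsHamPathGraph G) →
      (∀ G ∈ F, ∀ H ∈ F, G ≠ H → ContainsK4 (G ⊔ H)) →
      (∀ f : Fin n → Fin 3, {G | G ∈ F ∧ G ≤ tripartiteGraph f}.ncard ≤ 1) ∧
      (F.ncard : ℚ) ≤ (n + 1) ^ 2 * (3 / 2 : ℚ) ^ (n - 1)) := by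
  refine ⟨fun P Q _ _ h => h.not_colorable_three, fun F hHam hF => ⟨fun f => ?_, ?_⟩⟩
  · rw [Set.ncard_le_one (Set.toFinite _)]
    rintro G ⟨hG, hGf⟩ H ⟨hH, hHf⟩
    exact eq_of_le_tripartiteGraph hF hG hH hGf hHf
  · have hcount : F.ncard * 2 ^ (n - 1) ≤ (n + 1) ^ 2 * 3 ^ (n - 1) :=
      (ncard_mul_two_pow_le hF hHam).trans (three_pow_le_sq_mul_three_pow_pred n)
    rw [div_pow, ← mul_div_assoc, le_div_iff₀ (by positivity)]
    exact_mod_cast hcount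
end
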